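/- Let Σ be a [φ,e₃]-minimal surface in ℝ³ with height function μ = ⟨p,e₃⟩. Then the Laplacian of μ on Σ satisfies Δμ = φ'(μ) (1 − |∇μ|²), and the Hessian satisfies φ'(μ) ∇²μ = H 𝒮, where H is the mean curvature and 𝒮 the second fundamental form. -/

import Mathlib

noncomputable section

open Real MeasureTheory Set

/-- Euclidean 3-space. -/
abbrev E3 := EuclideanSpace ℝ (Fin 3)

/-- Third standard basis vector. -/
def e3v : E3 := EuclideanSpace.single (2 : Fin 3) (1 : ℝ)

/-- Coordinate directions in the parameter plane. -/
def dir : Fin 2 → ℝ × ℝ := fun i => if i = 0 then (1, 0) else (0, 1)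

/-- Partial derivative of a scalar function on the parameter plane. -/
def pdv (i : Fin 2) (f : ℝ × ℝ → ℝ) (p : ℝ × ℝ) : ℝ := fderiv ℝ f p (dir i)

/-- Coefficients of the first fundamental form of a parametrized surface `F`. -/
def gmat (F : ℝ × ℝ → E3) (i j : Fin 2) (p : ℝ × ℝ) : ℝ :=
  @inner ℝ _ _ (fderiv ℝ F p (dir i)) (fderiv ℝ F p (dir j))

def detg (F : ℝ × ℝ → E3) (p : ℝ × ℝ) : ℝ :=
  gmat F 0 0 p * gmat F 1 1 p - gmat F 0 1 p ^ 2

/-- Inverse metric coefficients. -/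
def ginv (F : ℝ × ℝ → E3) (i j : Fin 2) (p : ℝ × ℝ) : ℝ :=
  (if i = j then gmat F (i + 1) (i + 1) p else -gmat F i j p) / detg F p

/-- Intrinsic inner product `⟨∇f, ∇h⟩` of gradients of functions on the surface. -/
def gdot (F : ℝ × ℝ → E3) (f h : ℝ × ℝ → ℝ) (p : ℝ × ℝ) : ℝ :=
  ∑ i, ∑ j, ginv F i j p * pdv i f p * pdv j h p

/-- Laplace–Beltrami operator of the induced metric. -/
def lap (F : ℝ × ℝ → E3) (f : ℝ × ℝ → ℝ) (p : ℝ × ℝ) : ℝ :=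
  (∑ i, pdv i (fun q => Real.sqrt (detg F q) * ∑ j, ginv F i j q * pdv j f q) p) /
    Real.sqrt (detg F p)

/-- Christoffel symbols of the induced metric. -/
def christof (F : ℝ × ℝ → E3) (k i j : Fin 2) (p : ℝ × ℝ) : ℝ :=
  (∑ l, ginv F k l p * (pdv i (gmat F j l) p + pdv j (gmat F i l) p - pdv l (gmat F i j) p)) / 2

/-- Covariant Hessian of a function on the surface (coordinate components). -/
def hess (F : ℝ × ℝ → E3) (f : ℝ × ℝ → ℝ) (i j : Fin 2) (p : ℝ × ℝ) : ℝ :=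
  pdv i (pdv j f) p - ∑ k, christof F k i j p * pdv k f p

/-- Second fundamental form (components), with the convention `𝒮(u,v) = ⟨D_u N, dF v⟩`. -/
def SFF (F N : ℝ × ℝ → E3) (i j : Fin 2) (p : ℝ × ℝ) : ℝ :=
  @inner ℝ _ _ (fderiv ℝ N p (dir i)) (fderiv ℝ F p (dir j))

/-- Mean curvature. -/
def meanH (F N : ℝ × ℝ → E3) (p : ℝ × ℝ) : ℝ := ∑ i, ∑ j, ginv F i j p * SFF F N i j p

/-- Gauss curvature. -/
def gaussK (F N : ℝ × ℝ → E3) (p : ℝ × ℝ) : ℝ :=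
  (SFF F N 0 0 p * SFF F N 1 1 p - SFF F N 0 1 p * SFF F N 1 0 p) / detg F p

/-- Squared norm of the second fundamental form. -/
def Ssq (F N : ℝ × ℝ → E3) (p : ℝ × ℝ) : ℝ := meanH F N p ^ 2 - 2 * gaussK F N p

/-- Height function. -/
def muF (F : ℝ × ℝ → E3) (p : ℝ × ℝ) : ℝ := F p 2

/-- Angle function `η = ⟨N, e₃⟩`. -/
def etaF (N : ℝ × ℝ → E3) (p : ℝ × ℝ) : ℝ := N p 2

/-- `F` is a smooth immersion on `U`. -/
def Immersed (F : ℝ × ℝ → E3) (U : Set (ℝ × ℝ)) : Prop :=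
  ContDiff ℝ (⊤ : ℕ∞) F ∧ ∀ p ∈ U, 0 < detg F p

/-- `N` is a smooth unit normal field along `F` on `U`. -/
def UnitNormal (F N : ℝ × ℝ → E3) (U : Set (ℝ × ℝ)) : Prop :=
  ContDiff ℝ (⊤ : ℕ∞) N ∧ ∀ p ∈ U, @inner ℝ _ _ (N p) (N p) = (1 : ℝ) ∧
    @inner ℝ _ _ (N p) (fderiv ℝ F p (1, 0)) = (0 : ℝ) ∧
    @inner ℝ _ _ (N p) (fderiv ℝ F p (0, 1)) = (0 : ℝ)

/-- `[φ,e₃]`-minimality: `H = -φ'(μ) η`. -/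
def PhiMinimal (φ : ℝ → ℝ) (F N : ℝ × ℝ → E3) (U : Set (ℝ × ℝ)) : Prop :=
  ∀ p ∈ U, meanH F N p = -deriv φ (muF F p) * etaF N p

/-- Drift Laplacian `Δ^φ = Δ + ⟨∇(φ∘μ), ∇·⟩`. -/
def driftlap (φ : ℝ → ℝ) (F : ℝ × ℝ → E3) (f : ℝ × ℝ → ℝ) (p : ℝ × ℝ) : ℝ :=
  lap F f p + gdot F (fun q => φ (muF F q)) f p

/-- Length of a path on the surface. -/
def plength (F : ℝ × ℝ → E3) (γ : ℝ → ℝ × ℝ) : ℝ := ∫ t in (0:ℝ)..1, ‖deriv (F ∘ γ) t‖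

/-- Intrinsic distance on the parameter domain `U`. -/
def iDist (F : ℝ × ℝ → E3) (U : Set (ℝ × ℝ)) (p q : ℝ × ℝ) : ℝ :=
  sInf {l | ∃ γ : ℝ → ℝ × ℝ, ContDiff ℝ 1 γ ∧ γ 0 = p ∧ γ 1 = q ∧
    (∀ t ∈ Set.Icc (0:ℝ) 1, γ t ∈ U) ∧ l = plength F γ}

/-- Intrinsic geodesic disk of radius `ρ` centered at `p`. -/
def gDisk (F : ℝ × ℝ → E3) (U : Set (ℝ × ℝ)) (p : ℝ × ℝ) (ρ : ℝ) : Set (ℝ × ℝ) :=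
  {q ∈ U | iDist F U p q < ρ}


/-! ### Auxiliary lemmas -/

/-- Directional derivative of a vector-valued function. -/
def vdv (i : Fin 2) (G : ℝ × ℝ → E3) (p : ℝ × ℝ) : E3 := fderiv ℝ G p (dir i)

/-- Tangent vector fields of the parametrization. -/
def Xf (F : ℝ × ℝ → E3) (i : Fin 2) : ℝ × ℝ → E3 := fun q => fderiv ℝ F q (dir i)

lemma contDiff_deriv {F : ℝ × ℝ → E3} (hF : ContDiff ℝ (⊤ : ℕ∞) F) (i : Fin 2) :
    ContDiff ℝ (⊤ : ℕ∞) (Xf F i) :=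
  (hF.fderiv_right (by simp)).clm_apply contDiff_const

lemma pdv_inner {G H : ℝ × ℝ → E3} {p : ℝ × ℝ} (hG : DifferentiableAt ℝ G p)
    (hH : DifferentiableAt ℝ H p) (i : Fin 2) :
    pdv i (fun q => @inner ℝ _ _ (G q) (H q)) p =
      @inner ℝ _ _ (vdv i G p) (H p) + @inner ℝ _ _ (G p) (vdv i H p) := by
  rw [pdv, fderiv_inner_apply ℝ hG hH, vdv, vdv]; ring

lemma pdv_coord {G : ℝ × ℝ → E3} {p : ℝ × ℝ} (hG : DifferentiableAt ℝ G p) (i : Fin 2) :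
    pdv i (fun q => G q 2) p = vdv i G p 2 := by
  have h := ((EuclideanSpace.proj (2 : Fin 3)).hasFDerivAt (x := G p)).comp p hG.hasFDerivAt
  have he : (fun q => G q 2) = ⇑(EuclideanSpace.proj (2 : Fin 3)) ∘ G := rfl
  rw [pdv, he, h.fderiv]; rfl

lemma vdv_symm {F : ℝ × ℝ → E3} (hF : ContDiff ℝ (⊤ : ℕ∞) F) (p : ℝ × ℝ) (i j : Fin 2) :
    vdv i (Xf F j) p = vdv j (Xf F i) p := by
  have hsym : IsSymmSndFDerivAt ℝ F p := hF.contDiffAt.isSymmSndFDerivAt (by rw [minSmoothness_of_isRCLikeNormedField]; exact WithTop.coe_le_coe.mpr le_top)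
  have hd : DifferentiableAt ℝ (fderiv ℝ F) p :=
    ((hF.fderiv_right (m := 1) (WithTop.coe_le_coe.mpr le_top)).differentiable one_ne_zero) p
  have key : ∀ v w : ℝ × ℝ,
      fderiv ℝ (fun q => fderiv ℝ F q v) p w = fderiv ℝ (fderiv ℝ F) p w v := by
    intro v w
    have h := ((ContinuousLinearMap.apply ℝ E3 v).hasFDerivAt
      (x := fderiv ℝ F p)).comp p hd.hasFDerivAt
    have he : (fun q => fderiv ℝ F q v) = ⇑(ContinuousLinearMap.apply ℝ E3 v) ∘ (fderiv ℝ F) :=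
      rfl
    rw [he, h.fderiv]; rfl
  show fderiv ℝ (fun q => fderiv ℝ F q (dir j)) p (dir i)
      = fderiv ℝ (fun q => fderiv ℝ F q (dir i)) p (dir j)
  rw [key, key, hsym.eq]

lemma pdv_mul {f g : ℝ × ℝ → ℝ} {p : ℝ × ℝ} (hf : DifferentiableAt ℝ f p)
    (hg : DifferentiableAt ℝ g p) (i : Fin 2) :
    pdv i (fun q => f q * g q) p = pdv i f p * g p + f p * pdv i g p := by
  rw [pdv, fderiv_fun_mul hf hg]; simp [pdv]; ring

lemma pdv_inv {g : ℝ × ℝ → ℝ} {p : ℝ × ℝ}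
    (hg : DifferentiableAt ℝ g p) (hg0 : g p ≠ 0) (i : Fin 2) :
    pdv i (fun q => (g q)⁻¹) p = -pdv i g p / g p ^ 2 := by
  have h := (hasDerivAt_inv hg0).comp_hasFDerivAt p hg.hasFDerivAt
  rw [pdv, show fderiv ℝ (fun q => (g q)⁻¹) p = (-(g p ^ 2)⁻¹) • fderiv ℝ g p from h.fderiv]
  simp [pdv]; field_simp

lemma pdv_div {f g : ℝ × ℝ → ℝ} {p : ℝ × ℝ} (hf : DifferentiableAt ℝ f p)
    (hg : DifferentiableAt ℝ g p) (hg0 : g p ≠ 0) (i : Fin 2) :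
    pdv i (fun q => f q / g q) p
      = (pdv i f p * g p - f p * pdv i g p) / g p ^ 2 := by
  have : (fun q => f q / g q) = fun q => f q * (g q)⁻¹ := by
    funext q; rw [div_eq_mul_inv]
  rw [this, pdv_mul (g := fun q => (g q)⁻¹) hf (hg.inv hg0), pdv_inv hg hg0]
  field_simp; ring

lemma pdv_sqrt {f : ℝ × ℝ → ℝ} {p : ℝ × ℝ} (hf : DifferentiableAt ℝ f p)
    (hf0 : f p ≠ 0) (i : Fin 2) :
    pdv i (fun q => Real.sqrt (f q)) p = pdv i f p / (2 * Real.sqrt (f p)) := by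
  have h := (Real.hasDerivAt_sqrt hf0).comp_hasFDerivAt p hf.hasFDerivAt
  rw [pdv, show fderiv ℝ (fun q => Real.sqrt (f q)) p
      = (1 / (2 * Real.sqrt (f p))) • fderiv ℝ f p from h.fderiv]
  simp [pdv]; ring

lemma pdv_add {f g : ℝ × ℝ → ℝ} {p : ℝ × ℝ} (hf : DifferentiableAt ℝ f p)
    (hg : DifferentiableAt ℝ g p) (i : Fin 2) :
    pdv i (fun q => f q + g q) p = pdv i f p + pdv i g p := by
  rw [pdv, fderiv_fun_add hf hg]; rfl

lemma pdv_sub {f g : ℝ × ℝ → ℝ} {p : ℝ × ℝ} (hf : DifferentiableAt ℝ f p)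
    (hg : DifferentiableAt ℝ g p) (i : Fin 2) :
    pdv i (fun q => f q - g q) p = pdv i f p - pdv i g p := by
  rw [pdv, fderiv_fun_sub hf hg]; rfl

lemma pdv_neg {g : ℝ × ℝ → ℝ} {p : ℝ × ℝ} (i : Fin 2) :
    pdv i (fun q => -g q) p = -pdv i g p := by
  rw [pdv, fderiv_fun_neg]; rfl

lemma inner_e3v (v : E3) : @inner ℝ _ _ v e3v = v 2 := by simp [e3v, EuclideanSpace.inner_single_right]

lemma e3v_coord : e3v 2 = (1:ℝ) := by simp [e3v]

lemma gmat_fun (F : ℝ × ℝ → E3) (i j : Fin 2) :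
    gmat F i j = fun q => @inner ℝ _ _ (Xf F i q) (Xf F j q) := rfl

lemma gmat_symm (F : ℝ × ℝ → E3) (i j : Fin 2) : gmat F i j = gmat F j i := by
  funext q; exact real_inner_comm _ _

lemma detg_fun (F : ℝ × ℝ → E3) :
    detg F = fun q => gmat F 0 0 q * gmat F 1 1 q - gmat F 0 1 q ^ 2 := rfl

lemma ginv_fun00 (F : ℝ × ℝ → E3) : ginv F 0 0 = fun q => gmat F 1 1 q / detg F q := by
  funext q; simp [ginv]

lemma ginv_fun01 (F : ℝ × ℝ → E3) : ginv F 0 1 = fun q => -gmat F 0 1 q / detg F q := by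
  funext q; simp [ginv]

lemma ginv_fun10 (F : ℝ × ℝ → E3) : ginv F 1 0 = fun q => -gmat F 0 1 q / detg F q := by
  funext q; rw [gmat_symm F 0 1]; simp [ginv]

lemma ginv_fun11 (F : ℝ × ℝ → E3) : ginv F 1 1 = fun q => gmat F 0 0 q / detg F q := by
  funext q; have h2 : (1 + 1 : Fin 2) = 0 := rfl; simp [ginv, h2]

lemma resolution {X0 X1 n v w : E3}
    (hn : @inner ℝ _ _ n n = 1) (h0 : @inner ℝ _ _ X0 n = 0) (h1 : @inner ℝ _ _ X1 n = 0)
    (hdet : (0:ℝ) < @inner ℝ _ _ X0 X0 * @inner ℝ _ _ X1 X1 - @inner ℝ _ _ X0 X1 ^ 2) :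
    @inner ℝ _ _ v w * (@inner ℝ _ _ X0 X0 * @inner ℝ _ _ X1 X1 - @inner ℝ _ _ X0 X1 ^ 2)
      = @inner ℝ _ _ X1 X1 * (@inner ℝ _ _ X0 v * @inner ℝ _ _ X0 w)
        - @inner ℝ _ _ X0 X1 * (@inner ℝ _ _ X0 v * @inner ℝ _ _ X1 w
            + @inner ℝ _ _ X1 v * @inner ℝ _ _ X0 w)
        + @inner ℝ _ _ X0 X0 * (@inner ℝ _ _ X1 v * @inner ℝ _ _ X1 w)
        + (@inner ℝ _ _ X0 X0 * @inner ℝ _ _ X1 X1 - @inner ℝ _ _ X0 X1 ^ 2)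
            * (@inner ℝ _ _ n v * @inner ℝ _ _ n w) := by
  have h0' : @inner ℝ _ _ n X0 = 0 := by rw [real_inner_comm]; exact h0
  have h1' : @inner ℝ _ _ n X1 = 0 := by rw [real_inner_comm]; exact h1
  have h10 : @inner ℝ _ _ X1 X0 = @inner ℝ _ _ X0 X1 := real_inner_comm _ _
  have hd0 : (@inner ℝ _ _ X0 X0 * @inner ℝ _ _ X1 X1 - @inner ℝ _ _ X0 X1 ^ 2 : ℝ) ≠ 0 :=
    ne_of_gt hdet
  set g00 : ℝ := @inner ℝ _ _ X0 X0 with hg00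
  set g01 : ℝ := @inner ℝ _ _ X0 X1 with hg01
  set g11 : ℝ := @inner ℝ _ _ X1 X1 with hg11
  have key : ∀ z : E3, @inner ℝ _ _ X0 z = 0 → @inner ℝ _ _ X1 z = 0 →
      @inner ℝ _ _ n z = 0 → z = 0 := by
    intro z hz0 hz1 hzn
    by_cases hz : z = 0
    · exact hz
    have hcard : ¬ LinearIndependent ℝ ![z, X0, X1, n] := by
      intro hli
      have := hli.fintype_card_le_finrank
      simp [finrank_euclideanSpace] at this
    obtain ⟨g, hsum, k, hk⟩ := Fintype.not_linearIndependent_iff.mp hcard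
    have e : g 0 • z + g 1 • X0 + g 2 • X1 + g 3 • n = 0 := by
      have := hsum
      rw [Fin.sum_univ_four] at this
      simpa [add_assoc] using this
    have hz0' : @inner ℝ _ _ z X0 = 0 := by rw [real_inner_comm]; exact hz0
    have hz1' : @inner ℝ _ _ z X1 = 0 := by rw [real_inner_comm]; exact hz1
    have hzn' : @inner ℝ _ _ z n = 0 := by rw [real_inner_comm]; exact hzn
    have ez : g 0 * @inner ℝ _ _ z z = 0 := by
      have h := congrArg (fun y => @inner ℝ _ _ y z) e
      simp only [inner_add_left, real_inner_smul_left, inner_zero_left,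
        hz0, hz1, hzn, mul_zero, add_zero] at h
      exact h
    have hzz : @inner ℝ _ _ z z ≠ 0 := fun h => hz (inner_self_eq_zero.mp h)
    have hg0 : g 0 = 0 := by
      rcases mul_eq_zero.mp ez with h | h
      · exact h
      · exact absurd h hzz
    have en : g 3 = 0 := by
      have h := congrArg (fun y => @inner ℝ _ _ y n) e
      simp only [inner_add_left, real_inner_smul_left, inner_zero_left,
        hzn', h0, h1, hn, mul_zero, mul_one, zero_add, add_zero, hg0, zero_mul] at h
      exact h
    have e0 : g 1 * g00 + g 2 * g01 = 0 := by
      have h := congrArg (fun y => @inner ℝ _ _ y X0) e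
      simp only [inner_add_left, real_inner_smul_left, inner_zero_left,
        hz0', h0', hg0, en, zero_mul, mul_zero, zero_add, add_zero, h10] at h
      exact h
    have e1 : g 1 * g01 + g 2 * g11 = 0 := by
      have h := congrArg (fun y => @inner ℝ _ _ y X1) e
      simp only [inner_add_left, real_inner_smul_left, inner_zero_left,
        hz1', h1', hg0, en, zero_mul, mul_zero, zero_add, add_zero] at h
      exact h
    have hg1 : g 1 = 0 := by
      have h2 : g 1 * (g00 * g11 - g01 ^ 2) = 0 := by linear_combination g11 * e0 - g01 * e1
      rcases mul_eq_zero.mp h2 with h | h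
      · exact h
      · exact absurd h hd0
    have hg2 : g 2 = 0 := by
      have h2 : g 2 * (g00 * g11 - g01 ^ 2) = 0 := by linear_combination g00 * e1 - g01 * e0
      rcases mul_eq_zero.mp h2 with h | h
      · exact h
      · exact absurd h hd0
    fin_cases k
    · exact absurd hg0 hk
    · exact absurd hg1 hk
    · exact absurd hg2 hk
    · exact absurd en hk
  set a : ℝ := (g11 * @inner ℝ _ _ X0 w - g01 * @inner ℝ _ _ X1 w)
      / (g00 * g11 - g01 ^ 2) with ha
  set b : ℝ := (-g01 * @inner ℝ _ _ X0 w + g00 * @inner ℝ _ _ X1 w)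
      / (g00 * g11 - g01 ^ 2) with hb
  set c : ℝ := @inner ℝ _ _ n w with hc
  have had : a * (g00 * g11 - g01 ^ 2)
      = g11 * @inner ℝ _ _ X0 w - g01 * @inner ℝ _ _ X1 w := by
    rw [ha]; exact div_mul_cancel₀ _ hd0
  have hbd : b * (g00 * g11 - g01 ^ 2)
      = -g01 * @inner ℝ _ _ X0 w + g00 * @inner ℝ _ _ X1 w := by
    rw [hb]; exact div_mul_cancel₀ _ hd0
  have hu0 : w - a • X0 - b • X1 - c • n = 0 := by
    apply key
    · simp only [inner_sub_right, real_inner_smul_right, h0, mul_zero, sub_zero]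
      have hE : (@inner ℝ _ _ X0 w - a * g00 - b * g01) * (g00 * g11 - g01 ^ 2) = 0 := by
        linear_combination (-g00) * had + (-g01) * hbd
      exact (mul_eq_zero.mp hE).resolve_right hd0
    · simp only [inner_sub_right, real_inner_smul_right, h1, h10, mul_zero, sub_zero]
      have hE : (@inner ℝ _ _ X1 w - a * g01 - b * g11) * (g00 * g11 - g01 ^ 2) = 0 := by
        linear_combination (-g01) * had + (-g11) * hbd
      exact (mul_eq_zero.mp hE).resolve_right hd0
    · simp only [inner_sub_right, real_inner_smul_right, h0', h1', hn, hc]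
      ring
  have hw : w = a • X0 + b • X1 + c • n := by
    have h2 : w - (a • X0 + b • X1 + c • n) = w - a • X0 - b • X1 - c • n := by abel
    rw [← sub_eq_zero, h2, hu0]
  have expand : @inner ℝ _ _ v w = a * @inner ℝ _ _ X0 v + b * @inner ℝ _ _ X1 v
      + c * @inner ℝ _ _ n v := by
    rw [real_inner_comm, hw]
    simp only [inner_add_left, real_inner_smul_left]
  rw [expand]
  linear_combination (@inner ℝ _ _ X0 v) * had + (@inner ℝ _ _ X1 v) * hbd

set_option maxHeartbeats 1600000 in
/-- On a `[φ,e₃]`-minimal surface in `ℝ³` with height function `μ = ⟨p,e₃⟩`,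
the intrinsic Laplacian satisfies `Δμ = φ'(μ)(1 − |∇μ|²)` and the covariant Hessian satisfies
`φ'(μ) ∇²μ = H 𝒮`. -/
theorem laplacian_and_hessian_of_height (φ : ℝ → ℝ) (hφ : ContDiff ℝ (⊤ : ℕ∞) φ)
    (F N : ℝ × ℝ → E3) (U : Set (ℝ × ℝ)) (hU : IsOpen U)
    (hF : Immersed F U) (hN : UnitNormal F N U) (hmin : PhiMinimal φ F N U)
    (p : ℝ × ℝ) (hp : p ∈ U) :
    lap F (muF F) p = deriv φ (muF F p) * (1 - gdot F (muF F) (muF F) p) ∧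
      ∀ i j : Fin 2,
        deriv φ (muF F p) * hess F (muF F) i j p = meanH F N p * SFF F N i j p := by
  obtain ⟨hFs, hFdet⟩ := hF
  obtain ⟨hNs, hNo⟩ := hN
  have hdet : 0 < detg F p := hFdet p hp
  have hd0 : detg F p ≠ 0 := ne_of_gt hdet
  have detg_pt : detg F p = gmat F 0 0 p * gmat F 1 1 p - gmat F 0 1 p ^ 2 := rfl
  have hd0' : gmat F 0 0 p * gmat F 1 1 p - gmat F 0 1 p ^ 2 ≠ 0 := hd0
  -- smoothness
  have hXcd : ∀ i : Fin 2, ContDiff ℝ (⊤ : ℕ∞) (Xf F i) := contDiff_deriv hFs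
  have hXd : ∀ (i : Fin 2) (q : ℝ × ℝ), DifferentiableAt ℝ (Xf F i) q :=
    fun i q => ((hXcd i).differentiable (by simp)) q
  have hFd : ∀ q, DifferentiableAt ℝ F q := fun q => (hFs.differentiable (by simp)) q
  have hgcd : ∀ i j : Fin 2, ContDiff ℝ (⊤ : ℕ∞) (gmat F i j) := fun i j => by
    rw [gmat_fun]; exact (hXcd i).inner ℝ (hXcd j)
  have hgd : ∀ (i j : Fin 2) (q : ℝ × ℝ), DifferentiableAt ℝ (gmat F i j) q :=
    fun i j q => ((hgcd i j).differentiable (by simp)) q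
  have hdetcd : ContDiff ℝ (⊤ : ℕ∞) (detg F) := by
    rw [detg_fun]; exact ((hgcd 0 0).mul (hgcd 1 1)).sub ((hgcd 0 1).pow 2)
  have hdetd : DifferentiableAt ℝ (detg F) p := (hdetcd.differentiable (by simp)) p
  have hcoordcd : ∀ l : Fin 2, ContDiff ℝ (⊤ : ℕ∞) (fun q => Xf F l q 2) := by
    intro l
    have h := ((EuclideanSpace.proj (2 : Fin 3) : E3 →L[ℝ] ℝ).contDiff).comp (hXcd l)
    exact h
  have hcoordd : ∀ l : Fin 2, DifferentiableAt ℝ (fun q => Xf F l q 2) p :=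
    fun l => ((hcoordcd l).differentiable (by simp)) p
  have hNd : DifferentiableAt ℝ N p := (hNs.differentiable (by simp)) p
  -- μ derivatives
  have hmfun : ∀ j : Fin 2, pdv j (muF F) = fun q => Xf F j q 2 := fun j =>
    funext fun q => pdv_coord (hFd q) j
  have hm : ∀ j : Fin 2, pdv j (muF F) p = Xf F j p 2 := fun j => congrFun (hmfun j) p
  have hmm : ∀ i j : Fin 2, pdv i (pdv j (muF F)) p = vdv i (Xf F j) p 2 := fun i j => by
    rw [hmfun j]; exact pdv_coord (hXd j p) i
  have hsym : ∀ i j : Fin 2, vdv i (Xf F j) p = vdv j (Xf F i) p := vdv_symm hFs p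
  have hpg : ∀ k i j : Fin 2, pdv k (gmat F i j) p
      = @inner ℝ _ _ (vdv k (Xf F i) p) (Xf F j p)
        + @inner ℝ _ _ (Xf F i p) (vdv k (Xf F j) p) := fun k i j => by
    rw [gmat_fun]; exact pdv_inner (hXd i p) (hXd j p) k
  have cYX : ∀ (a b l : Fin 2), @inner ℝ _ _ (vdv a (Xf F b) p) (Xf F l p)
      = @inner ℝ _ _ (Xf F l p) (vdv a (Xf F b) p) := fun a b l => real_inner_comm _ _
  -- frame
  have hnn : @inner ℝ _ _ (N p) (N p) = (1:ℝ) := (hNo p hp).1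
  have horth : ∀ i : Fin 2, @inner ℝ _ _ (Xf F i p) (N p) = 0 := by
    intro i; fin_cases i
    · rw [real_inner_comm]; exact (hNo p hp).2.1
    · rw [real_inner_comm]; exact (hNo p hp).2.2
  have hres := fun v w : E3 => resolution (X0 := Xf F 0 p) (X1 := Xf F 1 p) (n := N p)
      (v := v) (w := w) hnn (horth 0) (horth 1) hdet
  have ginner : ∀ a b : Fin 2, @inner ℝ _ _ (Xf F a p) (Xf F b p) = gmat F a b p :=
    fun a b => rfl
  have hA : (1:ℝ) * (gmat F 0 0 p * gmat F 1 1 p - gmat F 0 1 p ^ 2)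
      = gmat F 1 1 p * (Xf F 0 p 2 * Xf F 0 p 2)
        - gmat F 0 1 p * (Xf F 0 p 2 * Xf F 1 p 2 + Xf F 1 p 2 * Xf F 0 p 2)
        + gmat F 0 0 p * (Xf F 1 p 2 * Xf F 1 p 2)
        + (gmat F 0 0 p * gmat F 1 1 p - gmat F 0 1 p ^ 2) * (N p 2 * N p 2) := by
    have h := hres e3v e3v
    simp only [inner_e3v, e3v_coord, ginner] at h
    exact h
  have hB : ∀ i j : Fin 2,
      vdv i (Xf F j) p 2 * (gmat F 0 0 p * gmat F 1 1 p - gmat F 0 1 p ^ 2)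
      = gmat F 1 1 p * (@inner ℝ _ _ (Xf F 0 p) (vdv i (Xf F j) p) * Xf F 0 p 2)
        - gmat F 0 1 p * (@inner ℝ _ _ (Xf F 0 p) (vdv i (Xf F j) p) * Xf F 1 p 2
            + @inner ℝ _ _ (Xf F 1 p) (vdv i (Xf F j) p) * Xf F 0 p 2)
        + gmat F 0 0 p * (@inner ℝ _ _ (Xf F 1 p) (vdv i (Xf F j) p) * Xf F 1 p 2)
        + (gmat F 0 0 p * gmat F 1 1 p - gmat F 0 1 p ^ 2)
            * (@inner ℝ _ _ (N p) (vdv i (Xf F j) p) * N p 2) := by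
    intro i j
    have h := hres (vdv i (Xf F j) p) e3v
    simp only [inner_e3v, e3v_coord, ginner] at h
    exact h
  -- second fundamental form via N
  have hSN : ∀ i j : Fin 2, SFF F N i j p = -@inner ℝ _ _ (N p) (vdv i (Xf F j) p) := by
    intro i j
    have hz : ∀ q ∈ U, @inner ℝ _ _ (N q) (Xf F j q) = (0:ℝ) := by
      intro q hq; fin_cases j
      · exact (hNo q hq).2.1
      · exact (hNo q hq).2.2
    have hev : (fun q => @inner ℝ _ _ (N q) (Xf F j q)) =ᶠ[nhds p] fun _ => (0:ℝ) :=
      Filter.eventuallyEq_of_mem (hU.mem_nhds hp) hz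
    have h0 : pdv i (fun q => @inner ℝ _ _ (N q) (Xf F j q)) p = 0 := by
      rw [pdv, hev.fderiv_eq]; simp
    rw [pdv_inner hNd (hXd j p) i] at h0
    have hS : SFF F N i j p = @inner ℝ _ _ (vdv i N p) (Xf F j p) := rfl
    rw [hS]; linarith
  -- pointwise inverse metric
  have gp00 : ginv F 0 0 p = gmat F 1 1 p / detg F p := congrFun (ginv_fun00 F) p
  have gp01 : ginv F 0 1 p = -gmat F 0 1 p / detg F p := congrFun (ginv_fun01 F) p
  have gp10 : ginv F 1 0 p = -gmat F 0 1 p / detg F p := congrFun (ginv_fun10 F) p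
  have gp11 : ginv F 1 1 p = gmat F 0 0 p / detg F p := congrFun (ginv_fun11 F) p
  -- Christoffel symbols
  have hchristof : ∀ k i j : Fin 2, christof F k i j p
      = ginv F k 0 p * @inner ℝ _ _ (Xf F 0 p) (vdv i (Xf F j) p)
        + ginv F k 1 p * @inner ℝ _ _ (Xf F 1 p) (vdv i (Xf F j) p) := by
    intro k i j
    simp only [christof, Fin.sum_univ_two]
    rw [hpg i j 0, hpg j i 0, hpg 0 i j, hpg i j 1, hpg j i 1, hpg 1 i j]
    simp only [cYX]
    simp only [hsym j i, hsym 0 i, hsym 1 i, hsym 0 j, hsym 1 j]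
    ring
  -- Hessian identity
  have hhess : ∀ i j : Fin 2, hess F (muF F) i j p = -(N p 2) * SFF F N i j p := by
    intro i j
    have hb := hB i j
    simp only [hess, Fin.sum_univ_two]
    rw [hmm i j, hchristof 0 i j, hchristof 1 i j, hm 0, hm 1, hSN i j,
        gp00, gp01, gp10, gp11, detg_pt]
    set S0 := @inner ℝ _ _ (Xf F 0 p) (vdv i (Xf F j) p) with hS0
    set S1 := @inner ℝ _ _ (Xf F 1 p) (vdv i (Xf F j) p) with hS1
    set nY := @inner ℝ _ _ (N p) (vdv i (Xf F j) p) with hnY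
    field_simp
    linear_combination (gmat F 0 0 p * gmat F 1 1 p - gmat F 0 1 p ^ 2)⁻¹ * hb
      - ((vdv i (Xf F j) p) 2 - N p 2 * nY) * mul_inv_cancel₀ hd0'
  -- mean curvature
  have hmeanH : meanH F N p = -deriv φ (muF F p) * (N p 2) := hmin p hp
  -- derivative of detg
  have hpdet : ∀ k : Fin 2, pdv k (detg F) p
      = pdv k (gmat F 0 0) p * gmat F 1 1 p + gmat F 0 0 p * pdv k (gmat F 1 1) p
        - 2 * gmat F 0 1 p * pdv k (gmat F 0 1) p := by
    intro k
    have h1 : detg F = fun q => gmat F 0 0 q * gmat F 1 1 q - gmat F 0 1 q * gmat F 0 1 q := by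
      funext q; rw [detg_fun]; ring
    rw [h1, pdv_sub (f := fun q => gmat F 0 0 q * gmat F 1 1 q) (g := fun q => gmat F 0 1 q * gmat F 0 1 q) ((hgd 0 0 p).mul (hgd 1 1 p)) ((hgd 0 1 p).mul (hgd 0 1 p)) k,
        pdv_mul (hgd 0 0 p) (hgd 1 1 p) k, pdv_mul (hgd 0 1 p) (hgd 0 1 p) k]
    ring
  -- differentiability and derivative of ginv
  have hginvd00 : DifferentiableAt ℝ (ginv F 0 0) p := by
    rw [ginv_fun00]; exact (hgd 1 1 p).mul (hdetd.inv hd0)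
  have hginvd01 : DifferentiableAt ℝ (ginv F 0 1) p := by
    rw [ginv_fun01]; exact ((hgd 0 1 p).neg).mul (hdetd.inv hd0)
  have hginvd10 : DifferentiableAt ℝ (ginv F 1 0) p := by
    rw [ginv_fun10]; exact ((hgd 0 1 p).neg).mul (hdetd.inv hd0)
  have hginvd11 : DifferentiableAt ℝ (ginv F 1 1) p := by
    rw [ginv_fun11]; exact (hgd 0 0 p).mul (hdetd.inv hd0)
  have hginvd : ∀ a b : Fin 2, DifferentiableAt ℝ (ginv F a b) p := by
    intro a b; fin_cases a <;> fin_cases b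
    · exact hginvd00
    · exact hginvd01
    · exact hginvd10
    · exact hginvd11
  have hpginv00 : ∀ k : Fin 2, pdv k (ginv F 0 0) p
      = (pdv k (gmat F 1 1) p * detg F p - gmat F 1 1 p * pdv k (detg F) p)
        / detg F p ^ 2 := fun k => by
    rw [ginv_fun00]; exact pdv_div (hgd 1 1 p) hdetd hd0 k
  have hpginv01 : ∀ k : Fin 2, pdv k (ginv F 0 1) p
      = (-pdv k (gmat F 0 1) p * detg F p + gmat F 0 1 p * pdv k (detg F) p)
        / detg F p ^ 2 := fun k => by
    rw [ginv_fun01, pdv_div (f := fun q => -gmat F 0 1 q) ((hgd 0 1 p).neg) hdetd hd0 k, pdv_neg k]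
    ring_nf
  have hpginv10 : ∀ k : Fin 2, pdv k (ginv F 1 0) p
      = (-pdv k (gmat F 0 1) p * detg F p + gmat F 0 1 p * pdv k (detg F) p)
        / detg F p ^ 2 := fun k => by
    rw [ginv_fun10, pdv_div (f := fun q => -gmat F 0 1 q) ((hgd 0 1 p).neg) hdetd hd0 k, pdv_neg k]
    ring_nf
  have hpginv11 : ∀ k : Fin 2, pdv k (ginv F 1 1) p
      = (pdv k (gmat F 0 0) p * detg F p - gmat F 0 0 p * pdv k (detg F) p)
        / detg F p ^ 2 := fun k => by
    rw [ginv_fun11]; exact pdv_div (hgd 0 0 p) hdetd hd0 k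
  -- computing the Laplacian
  have hGfun : ∀ i : Fin 2,
      (fun q => Real.sqrt (detg F q)
          * (ginv F i 0 q * pdv 0 (muF F) q + ginv F i 1 q * pdv 1 (muF F) q))
      = fun q => Real.sqrt (detg F q)
          * (ginv F i 0 q * Xf F 0 q 2 + ginv F i 1 q * Xf F 1 q 2) := by
    intro i; funext q
    simp only [hmfun]
  have hsqd : DifferentiableAt ℝ (fun q => Real.sqrt (detg F q)) p := hdetd.sqrt hd0
  have hdiffsum : ∀ i : Fin 2, DifferentiableAt ℝ
      (fun q => ginv F i 0 q * Xf F 0 q 2 + ginv F i 1 q * Xf F 1 q 2) p := fun i =>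
    ((hginvd i 0).mul (hcoordd 0)).add ((hginvd i 1).mul (hcoordd 1))
  have hpdvT : ∀ i : Fin 2,
      pdv i (fun q => Real.sqrt (detg F q)
          * (ginv F i 0 q * pdv 0 (muF F) q + ginv F i 1 q * pdv 1 (muF F) q)) p
      = pdv i (detg F) p / (2 * Real.sqrt (detg F p))
          * (ginv F i 0 p * Xf F 0 p 2 + ginv F i 1 p * Xf F 1 p 2)
        + Real.sqrt (detg F p)
          * (pdv i (ginv F i 0) p * Xf F 0 p 2 + ginv F i 0 p * vdv i (Xf F 0) p 2
            + (pdv i (ginv F i 1) p * Xf F 1 p 2 + ginv F i 1 p * vdv i (Xf F 1) p 2)) := by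
    intro i
    rw [hGfun i, pdv_mul hsqd (hdiffsum i) i, pdv_sqrt hdetd hd0 i,
        pdv_add (f := fun q => ginv F i 0 q * Xf F 0 q 2) (g := fun q => ginv F i 1 q * Xf F 1 q 2) ((hginvd i 0).mul (hcoordd 0)) ((hginvd i 1).mul (hcoordd 1)) i,
        pdv_mul (hginvd i 0) (hcoordd 0) i, pdv_mul (hginvd i 1) (hcoordd 1) i,
        pdv_coord (hXd 0 p) i, pdv_coord (hXd 1 p) i]
    all_goals ring
  have hs2 : Real.sqrt (detg F p) ^ 2 = detg F p := Real.sq_sqrt hdet.le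
  have hs0 : Real.sqrt (detg F p) ≠ 0 := (Real.sqrt_pos.mpr hdet).ne'
  have scal : ∀ s d u0 g0 a0 u1 g1 a1 : ℝ, s ^ 2 = d → s ≠ 0 →
      (u0 / (2 * s) * g0 + s * a0 + (u1 / (2 * s) * g1 + s * a1)) / s
        = u0 * g0 / (2 * d) + a0 + (u1 * g1 / (2 * d) + a1) := by
    rintro s d u0 g0 a0 u1 g1 a1 rfl hs
    field_simp
  have hlapE : lap F (muF F) p
      = pdv 0 (detg F) p * (ginv F 0 0 p * Xf F 0 p 2 + ginv F 0 1 p * Xf F 1 p 2)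
          / (2 * detg F p)
        + (pdv 0 (ginv F 0 0) p * Xf F 0 p 2 + ginv F 0 0 p * vdv 0 (Xf F 0) p 2
            + (pdv 0 (ginv F 0 1) p * Xf F 1 p 2 + ginv F 0 1 p * vdv 0 (Xf F 1) p 2))
        + (pdv 1 (detg F) p * (ginv F 1 0 p * Xf F 0 p 2 + ginv F 1 1 p * Xf F 1 p 2)
            / (2 * detg F p)
          + (pdv 1 (ginv F 1 0) p * Xf F 0 p 2 + ginv F 1 0 p * vdv 1 (Xf F 0) p 2
            + (pdv 1 (ginv F 1 1) p * Xf F 1 p 2 + ginv F 1 1 p * vdv 1 (Xf F 1) p 2))) := by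
    simp only [lap, Fin.sum_univ_two]
    rw [hpdvT 0, hpdvT 1]
    exact scal _ _ _ _ _ _ _ _ hs2 hs0
  have hlapTr : lap F (muF F) p = ∑ i, ∑ j, ginv F i j p * hess F (muF F) i j p := by
    rw [hlapE]
    conv_rhs => simp only [Fin.sum_univ_two, hess, christof]
    rw [hmm 0 0, hmm 0 1, hmm 1 0, hmm 1 1, hm 0, hm 1]
    rw [hpginv00 0, hpginv01 0, hpginv10 1, hpginv11 1, hpdet 0, hpdet 1]
    rw [gp00, gp01, gp10, gp11]
    rw [gmat_symm F 1 0]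
    rw [hsym 1 0]
    field_simp
    rw [detg_pt]
    ring
  constructor
  · -- Laplacian identity
    have hgd2 : gdot F (muF F) (muF F) p = 1 - N p 2 * N p 2 := by
      simp only [gdot, Fin.sum_univ_two]
      rw [hm 0, hm 1, gp00, gp01, gp10, gp11, detg_pt]
      field_simp
      linear_combination (-(gmat F 0 0 p * gmat F 1 1 p - gmat F 0 1 p ^ 2)⁻¹) * hA
        + (1 - N p 2 ^ 2) * mul_inv_cancel₀ hd0'
    rw [hlapTr, hgd2]
    simp only [Fin.sum_univ_two]
    rw [hhess 0 0, hhess 0 1, hhess 1 0, hhess 1 1]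
    have hMH : ginv F 0 0 p * SFF F N 0 0 p + ginv F 0 1 p * SFF F N 0 1 p
        + (ginv F 1 0 p * SFF F N 1 0 p + ginv F 1 1 p * SFF F N 1 1 p)
        = -deriv φ (muF F p) * N p 2 := by
      have h := hmeanH
      simp only [meanH, Fin.sum_univ_two] at h
      exact h
    linear_combination (-(N p 2)) * hMH
  · -- Hessian identity
    intro i j
    rw [hhess i j, hmeanH]
    ring
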